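/- Let F : ℝ^d → ℝ be differentiable with L-Lipschitz gradient, let q ∈ ℝ^d be an approximate gradient, α ≤ 3ρ/(4L) with ρ > 0, and suppose ⟨q, G⟩ ≥ ρ‖G‖² where G = (λ - λ⁺)/α and λ⁺ = λ - αG. Then F(λ⁺) - F(λ) ≤ -(3αρ/8)‖G‖² + (α/ρ)‖q - ∇F(λ)‖². -/

import Mathlib

/-!
By the descent lemma the step changes `F` by at most `-α⟪∇F(λ), G⟫ + (α²L/2)‖G‖²`.
Splitting `∇F(λ) = q - (q - ∇F(λ))`, the projection inequality and Young's inequality give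
`⟪∇F(λ), G⟫ ≥ (3ρ/4)‖G‖² - ‖q - ∇F(λ)‖²/ρ`, while `Lα ≤ 3ρ/4` bounds the quadratic term by
`(3αρ/8)‖G‖²`.
-/

open RealInnerProductSpace Set

section

variable {E : Type*} [NormedAddCommGroup E] [InnerProductSpace ℝ E]

theorem real_inner_le_sq_div_add_mul_sq (a b : E) {ε : ℝ} (hε : 0 < ε) :
    ⟪a, b⟫ ≤ ‖a‖ ^ 2 / ε + ε / 4 * ‖b‖ ^ 2 := by
  have hsq : 0 ≤ (‖a‖ - ε / 2 * ‖b‖) ^ 2 / ε := by positivity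
  have hexpand : (‖a‖ - ε / 2 * ‖b‖) ^ 2 / ε = ‖a‖ ^ 2 / ε + ε / 4 * ‖b‖ ^ 2 - ‖a‖ * ‖b‖ := by
    field_simp
    ring
  linarith [real_inner_le_norm a b]

variable [CompleteSpace E]

theorem HasGradientAt.hasDerivAt_comp_add_smul {f : E → ℝ} {g x v : E} {t : ℝ}
    (hf : HasGradientAt f g (x + t • v)) :
    HasDerivAt (fun s : ℝ => f (x + s • v)) ⟪g, v⟫ t := by
  have hline : HasDerivAt (fun s : ℝ => x + s • v) v t := by
    simpa using ((hasDerivAt_id t).smul_const v).const_add x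
  simpa [Function.comp_def] using hf.hasFDerivAt.comp_hasDerivAt t hline

theorem le_add_inner_add_sq_of_lipschitz_gradient {f : E → ℝ} {f' : E → E} {L : ℝ}
    (hf : ∀ x, HasGradientAt f (f' x) x) (hLip : ∀ x y, ‖f' x - f' y‖ ≤ L * ‖x - y‖) (x v : E) :
    f (x + v) ≤ f x + ⟪f' x, v⟫ + L / 2 * ‖v‖ ^ 2 := by
  set g : ℝ → ℝ := fun t => f (x + t • v) - t * ⟪f' x, v⟫ - L / 2 * t ^ 2 * ‖v‖ ^ 2
  have hderiv : ∀ t, HasDerivAt g (⟪f' (x + t • v), v⟫ - ⟪f' x, v⟫ - L * t * ‖v‖ ^ 2) t := by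
    intro t
    refine (((HasGradientAt.hasDerivAt_comp_add_smul (x := x) (v := v) (t := t) (hf _)).sub
      ((hasDerivAt_id t).mul_const ⟪f' x, v⟫)).sub
      (((hasDerivAt_pow 2 t).const_mul (L / 2)).mul_const (‖v‖ ^ 2))).congr_deriv ?_
    push_cast
    ring
  have hderiv_nonpos : ∀ t ∈ Ioi (0 : ℝ),
      ⟪f' (x + t • v), v⟫ - ⟪f' x, v⟫ - L * t * ‖v‖ ^ 2 ≤ 0 := by
    intro t ht
    calc ⟪f' (x + t • v), v⟫ - ⟪f' x, v⟫ - L * t * ‖v‖ ^ 2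
        = ⟪f' (x + t • v) - f' x, v⟫ - L * t * ‖v‖ ^ 2 := by rw [inner_sub_left]
      _ ≤ ‖f' (x + t • v) - f' x‖ * ‖v‖ - L * ‖(x + t • v) - x‖ * ‖v‖ := by
          rw [add_sub_cancel_left, norm_smul, Real.norm_of_nonneg ht.le]
          nlinarith [real_inner_le_norm (f' (x + t • v) - f' x) v]
      _ ≤ 0 := by
          nlinarith [hLip (x + t • v) x, norm_nonneg v]
  have hanti : AntitoneOn g (Ici 0) := by
    refine antitoneOn_of_hasDerivWithinAt_nonpos (convex_Ici 0)
      (fun t _ => (hderiv t).continuousAt.continuousWithinAt)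
      (fun t _ => (hderiv t).hasDerivWithinAt) ?_
    simpa only [interior_Ici] using hderiv_nonpos
  have := hanti self_mem_Ici (mem_Ici.2 zero_le_one) zero_le_one
  simp only [g, one_smul, one_mul, one_pow, mul_one, zero_smul, add_zero, zero_mul, sub_zero,
    ne_eq, OfNat.ofNat_ne_zero, not_false_eq_true, zero_pow, mul_zero] at this
  linarith

theorem sub_le_of_lipschitz_gradient_step {f : E → ℝ} {f' : E → E} {L : ℝ}
    (hf : ∀ x, HasGradientAt f (f' x) x) (hLip : ∀ x y, ‖f' x - f' y‖ ≤ L * ‖x - y‖)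
    (x G : E) (α : ℝ) :
    f (x - α • G) - f x ≤ -α * ⟪f' x, G⟫ + α ^ 2 * L / 2 * ‖G‖ ^ 2 := by
  have h := le_add_inner_add_sq_of_lipschitz_gradient hf hLip x (-(α • G))
  rw [← sub_eq_add_neg, inner_neg_right, real_inner_smul_right, norm_neg, norm_smul,
    mul_pow, Real.norm_eq_abs, sq_abs] at h
  linarith

end

theorem approx_gradient_descent_bound_general {d : ℕ}
    (F : EuclideanSpace ℝ (Fin d) → ℝ)
    (F' : EuclideanSpace ℝ (Fin d) → EuclideanSpace ℝ (Fin d))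
    (L ρ α : ℝ) (hρ : 0 < ρ)
    (hgrad : ∀ x, HasGradientAt F (F' x) x)
    (hLip : ∀ x y, ‖F' x - F' y‖ ≤ L * ‖x - y‖)
    (hα : 0 < α) (hαρ : α ≤ 3 * ρ / (4 * L))
    (lam q G : EuclideanSpace ℝ (Fin d))
    (hproj : ⟪q, G⟫ ≥ ρ * ‖G‖ ^ 2) :
    F (lam - α • G) - F lam ≤
      -(3 * α * ρ / 8) * ‖G‖ ^ 2 + (α / ρ) * ‖q - F' lam‖ ^ 2 := by
  have hdescent := sub_le_of_lipschitz_gradient_step hgrad hLip lam G α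
  have hsplit : ⟪F' lam, G⟫ = ⟪q, G⟫ - ⟪q - F' lam, G⟫ := by rw [inner_sub_left]; ring
  have hyoung := real_inner_le_sq_div_add_mul_sq (q - F' lam) G hρ
  have hLα : L * α ≤ 3 * ρ / 4 := by
    rcases le_or_gt L 0 with hL | hL
    · linarith [mul_nonpos_of_nonpos_of_nonneg hL hα.le]
    · rw [le_div_iff₀ (by positivity)] at hαρ
      linarith
  have hαG : 0 ≤ α * ‖G‖ ^ 2 := by positivity
  have hscale : α / ρ * ‖q - F' lam‖ ^ 2 = α * (‖q - F' lam‖ ^ 2 / ρ) := by ring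
  rw [hsplit] at hdescent
  linarith [mul_le_mul_of_nonneg_left hyoung hα.le, mul_le_mul_of_nonneg_left hproj hα.le,
    mul_le_mul_of_nonneg_right hLα hαG]

/-- One-step progress bound with an approximate gradient under the
generalized-projection inequality. -/
theorem approx_gradient_descent_bound {d : ℕ}
    (F : EuclideanSpace ℝ (Fin d) → ℝ)
    (F' : EuclideanSpace ℝ (Fin d) → EuclideanSpace ℝ (Fin d))
    (L ρ α : ℝ) (hL : 0 < L) (hρ : 0 < ρ)
    (hgrad : ∀ x, HasGradientAt F (F' x) x)
    (hLip : ∀ x y, ‖F' x - F' y‖ ≤ L * ‖x - y‖)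
    (hα : 0 < α) (hαρ : α ≤ 3 * ρ / (4 * L))
    (lam q G : EuclideanSpace ℝ (Fin d))
    (hproj : ⟪q, G⟫ ≥ ρ * ‖G‖ ^ 2) :
    F (lam - α • G) - F lam ≤
      -(3 * α * ρ / 8) * ‖G‖ ^ 2 + (α / ρ) * ‖q - F' lam‖ ^ 2 :=
  approx_gradient_descent_bound_general F F' L ρ α hρ hgrad hLip hα hαρ lam q G hproj
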